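/- Let G be a finite connected simple graph with m vertices and n \geq 1 edges, and let G^(0) be its symmetric tube. Then 2(|E(G^(0))| - |V(G^(0))| + 1) = 2 - 4n + \sum_{v \in V(G)} (deg(v))^2; that is, the cycle rank |E(G^(0))| - |V(G^(0))| + 1 of the connected graph G^(0) equals 1 - 2n + (1/2)\sum_{v \in V(G)} (deg(v))^2. -/

import Mathlib

open SimpleGraph

variable {V : Type*}

/-- A pair-vertex of the symmetric tube: a vertex `v` together with an unordered pair
of two distinct neighbors of `v`. -/
abbrev TubePair (G : SimpleGraph V) : Type _ :=
  {p : V × Sym2 V // ¬ p.2.IsDiag ∧ ∀ x ∈ p.2, G.Adj p.1 x}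

/-- The vertex set of the symmetric tube: darts of `G` together with pair-vertices. -/
abbrev TubeVertex (G : SimpleGraph V) : Type _ := G.Dart ⊕ TubePair G

/-- The symmetric tube `G⁽⁰⁾` of a simple graph `G`: an X-edge joins the darts `(v,u)` and
`(u,v)` for each edge `{v,u}` of `G`, and Y-edges join the pair-vertex `(v,{a,b})` to each of
the darts `(v,a)` and `(v,b)`. -/
def tube (G : SimpleGraph V) : SimpleGraph (TubeVertex G) where
  Adj x y :=
    match x, y with
    | Sum.inl d, Sum.inl d' => d' = d.symm
    | Sum.inl d, Sum.inr p => p.1.1 = d.fst ∧ d.snd ∈ p.1.2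
    | Sum.inr p, Sum.inl d => p.1.1 = d.fst ∧ d.snd ∈ p.1.2
    | Sum.inr _, Sum.inr _ => False
  symm := by
    refine ⟨?_⟩
    rintro (d | p) (d' | p') h
    · simp only at h ⊢
      rw [h, SimpleGraph.Dart.symm_symm]
    · exact h
    · exact h
    · exact h
  loopless := by
    refine ⟨?_⟩
    rintro (d | p) h
    · exact SimpleGraph.Dart.symm_ne d h.symm
    · exact h

/-!
A dart `(v,u)` of `G⁽⁰⁾` is adjacent to its reverse `(u,v)` and to the `deg v - 1` pair-vertices
`(v,{u,x})`, so it has degree `deg v`, while every pair-vertex has degree `2`. The handshake lemma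
therefore gives `2|E(G⁽⁰⁾)| = ∑ (deg v)² + 2|P|`; since `|V(G⁽⁰⁾)| = 2n + |P|`, the pair-vertices
cancel from `2(|E(G⁽⁰⁾)| - |V(G⁽⁰⁾)| + 1)`.
-/

open Finset

namespace SimpleGraph

lemma sum_dart_fst [Fintype V] [DecidableEq V] (G : SimpleGraph V) [DecidableRel G.Adj]
    {M : Type*} [AddCommMonoid M] (f : V → M) :
    ∑ d : G.Dart, f d.fst = ∑ v, G.degree v • f v := by
  rw [← sum_fiberwise univ fun d : G.Dart => d.fst]
  refine sum_congr rfl fun v _ => ?_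
  rw [sum_congr rfl fun d hd => by rw [(mem_filter.1 hd).2], sum_const,
    dart_fst_fiber_card_eq_degree]

end SimpleGraph

section Degree

variable {G : SimpleGraph V} [DecidableEq V]

def tubeNeighborSetDartEquiv (d : G.Dart) :
    (tube G).neighborSet (.inl d) ≃ G.neighborSet d.fst where
  toFun
    | ⟨.inl _, _⟩ => ⟨d.snd, d.adj⟩
    | ⟨.inr p, h⟩ => ⟨Sym2.Mem.other' h.2,
      (congrArg (G.Adj · _) h.1).mp (p.2.2 _ (Sym2.other_mem' h.2))⟩
  invFun x :=
    if hx : (x : V) = d.snd then ⟨.inl d.symm, rfl⟩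
    else ⟨.inr ⟨(d.fst, s(d.snd, x)), by simpa using Ne.symm hx,
      fun y hy => by rcases Sym2.mem_iff.1 hy with rfl | rfl; exacts [d.adj, x.2]⟩,
      rfl, Sym2.mem_mk_left _ _⟩
  left_inv := by
    rintro ⟨d' | p, h⟩
    · obtain rfl : d' = d.symm := h
      simp
    · have hne : Sym2.Mem.other' h.2 ≠ d.snd := by
        rw [← Sym2.other_eq_other']
        exact Sym2.other_ne p.2.1 h.2
      simp only [hne, dif_neg, not_false_eq_true]
      exact Subtype.ext (congrArg Sum.inr (Subtype.ext (Prod.ext h.1.symm (Sym2.other_spec' h.2))))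
  right_inv := by
    rintro ⟨x, hx⟩
    by_cases hxd : x = d.snd
    · subst hxd
      simp
    · simp only [hxd, dif_neg, not_false_eq_true]
      exact Subtype.ext (Sym2.congr_right.mp (Sym2.other_spec' (Sym2.mem_mk_left d.snd x)))

def tubeNeighborSetPairEquiv (p : TubePair G) :
    (tube G).neighborSet (.inr p) ≃ p.1.2.toFinset where
  toFun
    | ⟨.inl d, h⟩ => ⟨d.snd, Sym2.mem_toFinset.2 h.2⟩
    | ⟨.inr _, h⟩ => h.elim
  invFun x := ⟨.inl ⟨(p.1.1, x), p.2.2 x (Sym2.mem_toFinset.1 x.2)⟩, rfl, Sym2.mem_toFinset.1 x.2⟩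
  left_inv := by
    rintro ⟨d | q, h⟩
    · exact Subtype.ext (congrArg Sum.inl (Dart.ext _ _ (Prod.ext h.1 rfl)))
    · exact h.elim
  right_inv _ := rfl

lemma tube_degree_dart (d : G.Dart) [Fintype ((tube G).neighborSet (.inl d))]
    [Fintype (G.neighborSet d.fst)] : (tube G).degree (.inl d) = G.degree d.fst := by
  rw [← card_neighborSet_eq_degree, ← card_neighborSet_eq_degree]
  exact Fintype.card_congr (tubeNeighborSetDartEquiv d)

lemma tube_degree_pair (p : TubePair G) [Fintype ((tube G).neighborSet (.inr p))] :
    (tube G).degree (.inr p) = 2 := by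
  rw [← card_neighborSet_eq_degree, Fintype.card_congr (tubeNeighborSetPairEquiv p),
    Fintype.card_coe, Sym2.card_toFinset_of_not_isDiag _ p.2.1]

end Degree

section Count

variable [Fintype V] (G : SimpleGraph V) [DecidableRel G.Adj]

lemma natCard_tubeVertex :
    Nat.card (TubeVertex G) = 2 * #G.edgeFinset + Nat.card (TubePair G) := by
  rw [Nat.card_sum, Nat.card_eq_fintype_card (α := G.Dart), dart_card_eq_twice_card_edges]

lemma two_mul_natCard_edgeSet_tube [DecidableEq V] :
    2 * Nat.card (tube G).edgeSet = ∑ v, G.degree v ^ 2 + 2 * Nat.card (TubePair G) := by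
  classical
  rw [Nat.card_eq_fintype_card, card_edgeSet, ← sum_degrees_eq_twice_card_edges,
    Fintype.sum_sum_type]
  simp only [tube_degree_dart, tube_degree_pair, sum_dart_fst G fun v => G.degree v, sum_const,
    card_univ, smul_eq_mul, Nat.card_eq_fintype_card, sq]
  ring

end Count

theorem stmt_9_general {V : Type*} [Fintype V] [DecidableEq V] (G : SimpleGraph V)
    [DecidableRel G.Adj] (n : ℕ) (hn : n = G.edgeFinset.card) :
    2 * ((Nat.card (tube G).edgeSet : ℤ) - (Nat.card (TubeVertex G) : ℤ) + 1) =
      2 - 4 * (n : ℤ) + ∑ v : V, (G.degree v : ℤ) ^ 2 := by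
  have hE := two_mul_natCard_edgeSet_tube G
  have hV := natCard_tubeVertex G
  subst hn
  zify at hE hV
  linarith

/-- For a finite connected simple graph `G` with `m` vertices and `n ≥ 1` edges, the cycle
rank `|E(G⁽⁰⁾)| - |V(G⁽⁰⁾)| + 1` of the connected symmetric tube `G⁽⁰⁾` satisfies
`2(|E(G⁽⁰⁾)| - |V(G⁽⁰⁾)| + 1) = 2 - 4n + ∑_v (deg v)²`. -/
theorem stmt_9 {V : Type*} [Fintype V] [DecidableEq V] (G : SimpleGraph V)
    [DecidableRel G.Adj] (hG : G.Connected) (m n : ℕ) (hm : m = Fintype.card V)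
    (hn : n = G.edgeFinset.card) (hn1 : 1 ≤ n) :
    2 * ((Nat.card (tube G).edgeSet : ℤ) - (Nat.card (TubeVertex G) : ℤ) + 1) =
      2 - 4 * (n : ℤ) + ∑ v : V, (G.degree v : ℤ) ^ 2 :=
  stmt_9_general G n hn
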